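/- Define the subset Γ₀(6)^{+3} of SL₂(ℝ) as the union of {[[a,b],[6c,d]] : a,b,c,d ∈ ℤ, ad − 6bc = 1} and {√3·[[a,b/3],[2c,d]] : a,b,c,d ∈ ℤ, 3ad − 2bc = 1}. Then Γ₀(6)^{+3} = Γ₀(6) ∪ M·Γ₀(6), where M = √3·[[1,2/3],[−2,−1]] (that is, M = i·R_{1/4}). In particular, Γ₀(6)^{+3} is a subgroup of SL₂(ℝ) containing Γ₀(6) with index two. -/

import Mathlib

open Matrix
open scoped MatrixGroups

noncomputable section

/-- `Γ₀(6)` viewed as a subset of `SL(2, ℝ)`: matrices `[[a,b],[6c,d]]` with integer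
entries and determinant `ad - 6bc = 1`. -/
def Gamma06R : Set SL(2, ℝ) :=
  {g | ∃ a b c d : ℤ, (g : Matrix (Fin 2) (Fin 2) ℝ) = !![(a : ℝ), (b : ℝ); 6 * (c : ℝ), (d : ℝ)]
    ∧ a * d - 6 * b * c = 1}

/-- The Fricke-type extension `Γ₀(6)^{+3}` of `Γ₀(6)` inside `SL(2, ℝ)`. -/
def Gamma06plus3 : Set SL(2, ℝ) :=
  Gamma06R ∪
    {g | ∃ a b c d : ℤ, (g : Matrix (Fin 2) (Fin 2) ℝ)
      = Real.sqrt 3 • !![(a : ℝ), (b : ℝ) / 3; 2 * (c : ℝ), (d : ℝ)] ∧ 3 * a * d - 2 * b * c = 1}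

/-- `M = √3·[[1,2/3],[-2,-1]] = i·R_{1/4}` as an element of `SL(2, ℝ)`. -/
def Mw : SL(2, ℝ) :=
  ⟨Real.sqrt 3 • !![1, 2/3; -2, -1], by
    rw [Matrix.det_smul]
    norm_num [Matrix.det_fin_two_of]⟩

/-- The second (Fricke) piece. -/
def S3 : Set SL(2, ℝ) :=
  {g | ∃ a b c d : ℤ, (g : Matrix (Fin 2) (Fin 2) ℝ)
      = Real.sqrt 3 • !![(a : ℝ), (b : ℝ) / 3; 2 * (c : ℝ), (d : ℝ)] ∧ 3 * a * d - 2 * b * c = 1}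

lemma Gamma06plus3_eq : Gamma06plus3 = Gamma06R ∪ S3 := rfl

lemma hs3 : Real.sqrt 3 * Real.sqrt 3 = 3 := Real.mul_self_sqrt (by norm_num)

lemma one_mem_K : (1 : SL(2,ℝ)) ∈ Gamma06R := by
  refine ⟨1, 0, 0, 1, ?_, by ring⟩
  rw [Matrix.SpecialLinearGroup.coe_one, Matrix.one_fin_two]
  norm_num

lemma mul_KK {g h : SL(2,ℝ)} (hg : g ∈ Gamma06R) (hh : h ∈ Gamma06R) : g * h ∈ Gamma06R := by
  obtain ⟨a,b,c,d,hm,hd⟩ := hg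
  obtain ⟨a',b',c',d',hm',hd'⟩ := hh
  refine ⟨a*a'+6*b*c', a*b'+b*d', c*a'+d*c', 6*b'*c+d*d', ?_, ?_⟩
  · rw [Matrix.SpecialLinearGroup.coe_mul, hm, hm']
    ext i j
    fin_cases i <;> fin_cases j <;>
      simp [Matrix.mul_apply, Fin.sum_univ_two] <;> push_cast <;> ring
  · linear_combination (a'*d'-6*b'*c')*hd + hd'

lemma mul_SS {g h : SL(2,ℝ)} (hg : g ∈ S3) (hh : h ∈ S3) : g * h ∈ Gamma06R := by
  obtain ⟨a,b,c,d,hm,hd⟩ := hg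
  obtain ⟨a',b',c',d',hm',hd'⟩ := hh
  refine ⟨3*a*a'+2*b*c', a*b'+b*d', c*a'+d*c', 2*c*b'+3*d*d', ?_, ?_⟩
  · rw [Matrix.SpecialLinearGroup.coe_mul, hm, hm', smul_mul_assoc, mul_smul_comm, smul_smul, hs3]
    ext i j
    fin_cases i <;> fin_cases j <;>
      simp [Matrix.mul_apply, Fin.sum_univ_two] <;> push_cast <;> ring
  · linear_combination (3*a'*d'-2*b'*c')*hd + hd'

lemma mul_KS {g h : SL(2,ℝ)} (hg : g ∈ Gamma06R) (hh : h ∈ S3) : g * h ∈ S3 := by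
  obtain ⟨a,b,c,d,hm,hd⟩ := hg
  obtain ⟨a',b',c',d',hm',hd'⟩ := hh
  refine ⟨a*a'+2*b*c', a*b'+3*b*d', 3*c*a'+d*c', 2*c*b'+d*d', ?_, ?_⟩
  · rw [Matrix.SpecialLinearGroup.coe_mul, hm, hm', mul_smul_comm]
    congr 1
    ext i j
    fin_cases i <;> fin_cases j <;>
      simp [Matrix.mul_apply, Fin.sum_univ_two] <;> push_cast <;> ring
  · linear_combination (3*a'*d'-2*b'*c')*hd + hd'

lemma mul_SK {g h : SL(2,ℝ)} (hg : g ∈ S3) (hh : h ∈ Gamma06R) : g * h ∈ S3 := by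
  obtain ⟨a,b,c,d,hm,hd⟩ := hg
  obtain ⟨a',b',c',d',hm',hd'⟩ := hh
  refine ⟨a*a'+2*b*c', 3*a*b'+b*d', c*a'+3*d*c', 2*c*b'+d*d', ?_, ?_⟩
  · rw [Matrix.SpecialLinearGroup.coe_mul, hm, hm', smul_mul_assoc]
    congr 1
    ext i j
    fin_cases i <;> fin_cases j <;>
      simp [Matrix.mul_apply, Fin.sum_univ_two] <;> push_cast <;> ring
  · linear_combination (a'*d'-6*b'*c')*hd + hd'

lemma inv_coe {g : SL(2,ℝ)} : (↑(g⁻¹) : Matrix (Fin 2) (Fin 2) ℝ)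
    = !![g.1 1 1, -g.1 0 1; -g.1 1 0, g.1 0 0] := by
  rw [Matrix.SpecialLinearGroup.SL2_inv_expl]
  ext i j
  fin_cases i <;> fin_cases j <;> rfl

lemma inv_K {g : SL(2,ℝ)} (hg : g ∈ Gamma06R) : g⁻¹ ∈ Gamma06R := by
  obtain ⟨a,b,c,d,hm,hd⟩ := hg
  refine ⟨d, -b, -c, a, ?_, by linarith⟩
  rw [inv_coe, hm]
  ext i j
  fin_cases i <;> fin_cases j <;> simp <;> push_cast <;> ring

lemma inv_S {g : SL(2,ℝ)} (hg : g ∈ S3) : g⁻¹ ∈ S3 := by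
  obtain ⟨a,b,c,d,hm,hd⟩ := hg
  refine ⟨d, -b, -c, a, ?_, by linarith⟩
  rw [inv_coe, hm]
  ext i j
  fin_cases i <;> fin_cases j <;> simp <;> push_cast <;> ring

lemma Mw_mem_S3 : Mw ∈ S3 := by
  refine ⟨1, 2, -1, -1, ?_, by ring⟩
  show (Real.sqrt 3 • !![1, 2/3; -2, -1] : Matrix (Fin 2) (Fin 2) ℝ) = _
  norm_num

lemma disj {g : SL(2,ℝ)} (hg : g ∈ Gamma06R) (hg' : g ∈ S3) : False := by
  obtain ⟨a,b,c,d,hm,hd⟩ := hg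
  obtain ⟨a',b',c',d',hm',hd'⟩ := hg'
  have h00 : (a : ℝ) = Real.sqrt 3 * a' := by
    have := congrFun (congrFun (hm ▸ hm') 0) 0
    simpa using this
  by_cases ha : a' = 0
  · rw [ha] at hd'
    have h2 : (2:ℤ) ∣ 1 := ⟨-(b'*c'), by linarith⟩
    norm_num at h2
  · have hirr : Irrational (Real.sqrt 3) := by
      simpa using Nat.prime_three.irrational_sqrt
    have : Real.sqrt 3 = ((a : ℚ) / (a' : ℚ) : ℚ) := by
      push_cast
      field_simp at h00 ⊢
      linarith [h00]
    exact hirr ⟨_, this.symm⟩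

lemma S3_eq : S3 = (fun g => Mw * g) '' Gamma06R := by
  ext g
  constructor
  · intro hg
    exact ⟨Mw⁻¹ * g, mul_SS (inv_S Mw_mem_S3) hg, by simp [mul_inv_cancel_left]⟩
  · rintro ⟨k, hk, rfl⟩
    exact mul_SK Mw_mem_S3 hk

/-- `Γ₀(6)^{+3}` as a subgroup. -/
def Hsub : Subgroup SL(2,ℝ) where
  carrier := Gamma06plus3
  one_mem' := Or.inl one_mem_K
  mul_mem' := by
    rintro x y (hx|hx) (hy|hy)
    exacts [Or.inl (mul_KK hx hy), Or.inr (mul_KS hx hy),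
      Or.inr (mul_SK hx hy), Or.inl (mul_SS hx hy)]
  inv_mem' := by
    rintro x (hx|hx)
    exacts [Or.inl (inv_K hx), Or.inr (inv_S hx)]

/-- `Γ₀(6)` as a subgroup. -/
def Ksub : Subgroup SL(2,ℝ) where
  carrier := Gamma06R
  one_mem' := one_mem_K
  mul_mem' := fun hx hy => mul_KK hx hy
  inv_mem' := fun hx => inv_K hx

/-- `Γ₀(6)^{+3} = Γ₀(6) ∪ M·Γ₀(6)`, and `Γ₀(6)^{+3}` is a subgroup of `SL(2, ℝ)`
containing `Γ₀(6)` with index two. -/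
theorem Gamma06plus3_eq_union_and_index_two :
    Gamma06plus3 = Gamma06R ∪ (fun g => Mw * g) '' Gamma06R ∧
    ∃ H K : Subgroup SL(2, ℝ), (H : Set SL(2, ℝ)) = Gamma06plus3 ∧
      (K : Set SL(2, ℝ)) = Gamma06R ∧ K ≤ H ∧ K.relIndex H = 2 := by
  constructor
  · rw [Gamma06plus3_eq, S3_eq]
  · refine ⟨Hsub, Ksub, rfl, rfl, fun x hx => Or.inl hx, ?_⟩
    show (Ksub.subgroupOf Hsub).index = 2
    rw [Subgroup.index_eq_two_iff]
    refine ⟨⟨Mw, Or.inr Mw_mem_S3⟩, fun b => ?_⟩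
    rcases b.2 with hb | hb
    · exact Or.inr ⟨hb, fun h => disj (Subgroup.mem_subgroupOf.mp h) (mul_KS hb Mw_mem_S3)⟩
    · exact Or.inl ⟨Subgroup.mem_subgroupOf.mpr (mul_SS hb Mw_mem_S3),
        fun h => disj (Subgroup.mem_subgroupOf.mp h) hb⟩

end
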